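/- In the finite-sample setup, let a_(1) < a_(2) < ⋯ < a_(n) be the ordered max statistics and p_(1) ≤ ⋯ ≤ p_(n) the ordered empirical p-values, where pᵢ = 1 − F̂₀(aᵢ). Then: (i) for every j with 1 ≤ j ≤ n₀, 2n₀ · F̂₀(a_(j)) = j; and (ii) for every i with n − n₀ + 1 ≤ i ≤ n, 2n₀ · p_(i) = 2n₀ − n + i − 1. -/

import Mathlib

/-- In the finite-sample setup, let `a_(1) < ⋯ < a_(n)` be the
ordered max statistics (enumerated by a strictly monotone `aord` with the same
range as `a`) and `p_(i) = 1 − F̂₀(a_(n−i+1))` the ordered empirical p-values.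
Then (i) for `1 ≤ j ≤ n₀`, `2n₀·F̂₀(a_(j)) = j`; and (ii) for
`n − n₀ + 1 ≤ i ≤ n`, `2n₀·p_(i) = 2n₀ − n + i − 1`. -/
theorem ordered_pvalues_formula
    {n : ℕ} (hn : 0 < n) (a b : Fin n → ℝ)
    (hdist : Function.Injective (Sum.elim a b))
    (s : Fin (2 * n) → ℝ) (hs : StrictMono s)
    (hrange : Set.range s = Set.range (Sum.elim a b))
    (μhat : ℝ) (hμ : μhat = (s ⟨n - 1, by omega⟩ + s ⟨n, by omega⟩) / 2)
    (n₀ : ℕ) (hn₀a : n₀ = (Finset.univ.filter fun i => a i ≤ μhat).card)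
    (hn₀b : n₀ = (Finset.univ.filter fun i => μhat < b i).card)
    (hn₀pos : 0 < n₀) (hn₀n : n₀ ≤ n)
    (F₀hat : ℝ → ℝ)
    (hF₀hat : ∀ t, F₀hat t =
      ((((Finset.univ.filter fun i => a i ≤ μhat ∧ a i ≤ t).card
        + (Finset.univ.filter fun i => μhat < b i ∧ b i ≤ t).card : ℕ) : ℝ))
        / (2 * (n₀ : ℝ)))
    (aord : Fin n → ℝ) (haord : StrictMono aord)
    (haordrange : Set.range aord = Set.range a) :
    (∀ j : ℕ, ∀ _ : 1 ≤ j, ∀ _ : j ≤ n₀,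
        2 * (n₀ : ℝ) * F₀hat (aord ⟨j - 1, by omega⟩) = (j : ℝ)) ∧
      (∀ i : ℕ, ∀ _ : n - n₀ + 1 ≤ i, ∀ _ : i ≤ n,
        2 * (n₀ : ℝ) * (1 - F₀hat (aord ⟨n - i, by omega⟩))
          = 2 * (n₀ : ℝ) - (n : ℝ) + (i : ℝ) - 1) := by
  have ha_inj : Function.Injective a := by
    have : a = Sum.elim a b ∘ Sum.inl := rfl
    rw [this]; exact hdist.comp Sum.inl_injective
  have himg : Finset.univ.image a = Finset.univ.image aord := by
    apply Finset.coe_injective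
    simp [haordrange]
  have hcount : ∀ t : ℝ, (Finset.univ.filter fun i => a i ≤ t).card
      = (Finset.univ.filter fun k => aord k ≤ t).card := by
    intro t
    have h1 : ∀ (f : Fin n → ℝ), Function.Injective f →
        (Finset.univ.filter fun i => f i ≤ t).card
        = ((Finset.univ.image f).filter fun x => x ≤ t).card := by
      intro f hf
      rw [Finset.filter_image, Finset.card_image_of_injective _ hf]
    rw [h1 a ha_inj, h1 aord haord.injective, himg]
  -- card of sorted prefix
  have hprefix : ∀ m : Fin n, (Finset.univ.filter fun k => aord k ≤ aord m).card = m + 1 := by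
    intro m
    have : (Finset.univ.filter fun k => aord k ≤ aord m) = Finset.Iic m := by
      ext k
      simp [haord.le_iff_le]
    rw [this, Fin.card_Iic]
  -- aord m ≤ μhat for m < n₀
  have hbelow : ∀ m : Fin n, (m : ℕ) < n₀ → aord m ≤ μhat := by
    intro m hm
    by_contra hgt
    push_neg at hgt
    have hsub : (Finset.univ.filter fun k => aord k ≤ μhat) ⊆ Finset.Iio m := by
      intro k hk
      simp only [Finset.mem_filter] at hk
      simp only [Finset.mem_Iio]
      exact haord.lt_iff_lt.mp (lt_of_le_of_lt hk.2 hgt)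
    have := Finset.card_le_card hsub
    rw [Fin.card_Iio] at this
    rw [← hcount, ← hn₀a] at this
    omega
  have key : ∀ j : ℕ, ∀ _ : 1 ≤ j, ∀ _ : j ≤ n₀,
      2 * (n₀ : ℝ) * F₀hat (aord ⟨j - 1, by omega⟩) = (j : ℝ) := by
    intro j hj1 hjn
    set m : Fin n := ⟨j - 1, by omega⟩ with hm
    have hmμ : aord m ≤ μhat := hbelow m (by simp [hm]; omega)
    have hb0 : (Finset.univ.filter fun i => μhat < b i ∧ b i ≤ aord m).card = 0 := by
      rw [Finset.card_eq_zero, Finset.filter_eq_empty_iff]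
      intro i _
      rintro ⟨h1, h2⟩
      exact absurd (le_trans h2 hmμ) (not_le.mpr h1)
    have ha1 : (Finset.univ.filter fun i => a i ≤ μhat ∧ a i ≤ aord m).card = j := by
      have : (Finset.univ.filter fun i => a i ≤ μhat ∧ a i ≤ aord m)
          = (Finset.univ.filter fun i => a i ≤ aord m) := by
        apply Finset.filter_congr
        intro i _
        constructor
        · exact fun h => h.2
        · exact fun h => ⟨le_trans h hmμ, h⟩
      rw [this, hcount, hprefix m]
      simp [hm]; omega
    rw [hF₀hat, ha1, hb0]
    have hne : (n₀ : ℝ) ≠ 0 := Nat.cast_ne_zero.mpr (by omega)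
    field_simp
    simp
  refine ⟨key, ?_⟩
  intro i hi1 hi2
  have h1 : n - i = (n + 1 - i) - 1 := by omega
  have := key (n + 1 - i) (by omega) (by omega)
  have heq : (⟨n + 1 - i - 1, by omega⟩ : Fin n) = ⟨n - i, by omega⟩ := by
    simp [h1]
  rw [heq] at this
  have hcast : ((n + 1 - i : ℕ) : ℝ) = (n : ℝ) + 1 - (i : ℝ) := by
    push_cast [Nat.cast_sub (by omega : i ≤ n + 1)]; ring
  rw [hcast] at this
  nlinarith [this]
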